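/- Let m ≥ 1 and h ∈ ℤ with gcd(m,h) = 1, let k ≥ 1, and set s = gcd(k,m) and t = m/s. Then there exists a permutation matrix P ∈ GL_m(ℚ_p) such that P·B_{m,h}^k·P⁻¹ is block diagonal with s diagonal blocks, each equal to B_{t, kh/s}. -/

import Mathlib

/-!
Statement 4.  For `gcd(m,h) = 1`, `k ≥ 1`, `s = gcd(k,m)`, `t = m/s`, the matrix
`B_{m,h}^k` is conjugate by a permutation matrix to the block-diagonal matrix with
`s` diagonal blocks each equal to `B_{t, kh/s}`.  Conjugation by a permutation
matrix is expressed as taking the `submatrix` along a bijection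
`Fin m ≃ Fin t × Fin s`.
-/

open Matrix

noncomputable section

variable (p : ℕ) [Fact p.Prime] (κ : Type) [Field κ] [IsAlgClosed κ] [CharP κ p]

local notation "𝕎" => WittVector p κ
local notation "K" => FractionRing (WittVector p κ)

/-- The matrix `B_{m,h}`. -/
def Bmat (m : ℕ) (h : ℤ) : Matrix (Fin m) (Fin m) K :=
  fun r j => if (r : ℤ) % m = ((j : ℤ) + h) % m then (p : K) ^ (((j : ℤ) + h) / m) else 0

/-!
`B_{m,h}` sends `e_j` to `e_{j+h}`, so `B_{m,h}^k = B_{m,kh}`. Writing `m = t s` and `kh = s c`,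
index the basis as `e_{r + s q}` with `r < s`, `q < t`; then `e_{r + s q} ↦ e_{r + s (q + c)}`
keeps the residue `r` and acts on `q` as `B_{t,c}`, since `e_{r + s (q + t)} = p e_{r + s q}`.
-/

namespace Int

theorem add_mul_modEq_add_mul_iff {r r' s a b t : ℤ} (hr : 0 ≤ r) (hrs : r < s) (hr' : 0 ≤ r')
    (hrs' : r' < s) : r + s * a ≡ r' + s * b [ZMOD s * t] ↔ r = r' ∧ a ≡ b [ZMOD t] := by
  constructor
  · intro hab
    have hmod_s : r ≡ r' [ZMOD s] := by
      simpa only [Int.ModEq, Int.add_mul_emod_self_left] using hab.of_mul_right t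
    have hrr' : r = r' := by
      rwa [Int.ModEq, Int.emod_eq_of_lt hr hrs, Int.emod_eq_of_lt hr' hrs'] at hmod_s
    subst hrr'
    exact ⟨rfl, (Int.ModEq.mul_left_cancel_iff' (by omega)).mp (hab.add_left_cancel' r)⟩
  · rintro ⟨rfl, hab⟩
    exact (hab.mul_left' (c := s)).add_left r

theorem add_mul_ediv_mul {r s : ℤ} (a t : ℤ) (hr : 0 ≤ r) (hrs : r < s) :
    (r + s * a) / (s * t) = a / t := by
  rw [← Int.ediv_ediv_of_nonneg (by omega), Int.add_mul_ediv_left _ _ (by omega),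
    Int.ediv_eq_zero_of_lt hr hrs, zero_add]

end Int

section

omit [IsAlgClosed κ]

lemma Bmat_apply (m : ℕ) (h : ℤ) (r j : Fin m) :
    Bmat p κ m h r j =
      if (r : ℤ) = ((j : ℤ) + h) % m then (p : K) ^ (((j : ℤ) + h) / m) else 0 := by
  rw [Bmat, Int.emod_eq_of_lt (by omega) (by omega)]

lemma Bmat_zero (m : ℕ) : Bmat p κ m 0 = 1 := by
  ext r j
  have hj0 : (0 : ℤ) ≤ j := by omega
  have hjm : (j : ℤ) < m := by omega
  rw [Bmat_apply, add_zero, Int.emod_eq_of_lt hj0 hjm, Int.ediv_eq_zero_of_lt hj0 hjm, zpow_zero,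
    one_apply]
  simp only [Nat.cast_inj, Fin.val_inj]

lemma Bmat_mul (m : ℕ) (a b : ℤ) : Bmat p κ m a * Bmat p κ m b = Bmat p κ m (a + b) := by
  ext r j
  have hm : (0 : ℤ) < m := by exact_mod_cast r.pos
  have hlt := Int.emod_lt_of_pos ((j : ℤ) + b) hm
  set x₀ : Fin m := ⟨(((j : ℤ) + b) % m).toNat, by omega⟩
  have hx₀ : (x₀ : ℤ) = ((j : ℤ) + b) % m := Int.toNat_of_nonneg (Int.emod_nonneg _ hm.ne')
  have hcol (x : Fin m) : (x : ℤ) = ((j : ℤ) + b) % m ↔ x = x₀ := by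
    rw [← hx₀, Nat.cast_inj, Fin.val_inj]
  have hshift : (x₀ : ℤ) + a = ((j : ℤ) + (a + b)) + -(((j : ℤ) + b) / m) * m := by
    rw [hx₀, Int.emod_def]; ring
  simp only [mul_apply, Bmat_apply p κ m b, hcol, mul_ite, mul_zero, Finset.sum_ite_eq',
    Finset.mem_univ, if_true]
  rw [Bmat_apply, Bmat_apply, hshift, Int.add_mul_emod_self_right,
    Int.add_mul_ediv_right _ _ hm.ne']
  split_ifs
  · rw [← zpow_add₀ (WittVector.FractionRing.p_nonzero p κ)]
    congr 1; ring
  · rw [zero_mul]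

lemma Bmat_pow (m : ℕ) (h : ℤ) (k : ℕ) : Bmat p κ m h ^ k = Bmat p κ m (k * h) := by
  induction k with
  | zero => simp [Bmat_zero]
  | succ n ih => rw [pow_succ, ih, Bmat_mul]; congr 1; push_cast; ring

lemma Bmat_mul_mul_eq_submatrix_blockDiagonal (t s : ℕ) (c : ℤ) :
    Bmat p κ (t * s) (s * c) =
      (blockDiagonal fun _ : Fin s => Bmat p κ t c).submatrix finProdFinEquiv.symm
        finProdFinEquiv.symm := by
  ext x y
  obtain ⟨⟨q, r⟩, rfl⟩ := finProdFinEquiv.surjective x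
  obtain ⟨⟨q', r'⟩, rfl⟩ := finProdFinEquiv.surjective y
  have hcond := Int.add_mul_modEq_add_mul_iff (s := s) (a := q) (b := q' + c) (t := t)
    (r := r) (r' := r') (by omega) (by omega) (by omega) (by omega)
  have hexp := Int.add_mul_ediv_mul (s := s) (q' + c) t (r := r') (by omega) (by omega)
  have hindex : ((r' : ℕ) : ℤ) + s * q' + s * c = r' + s * (q' + c) := by ring
  simp only [submatrix_apply, Equiv.symm_apply_apply, blockDiagonal_apply, Bmat,
    finProdFinEquiv_apply_val]
  push_cast
  rw [hindex, mul_comm (t : ℤ), hexp]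
  simp only [Int.ModEq] at hcond
  simp only [hcond, Nat.cast_inj, Fin.val_inj, ite_and]

end

theorem statement_4 (m : ℕ) (h : ℤ)
    (k : ℕ) (s t : ℕ) (hs : s = Nat.gcd k m) (ht : t = m / s) :
    ∃ e : Fin m ≃ Fin t × Fin s,
      (Bmat p κ m h) ^ k =
        (Matrix.blockDiagonal fun _ : Fin s => Bmat p κ t (((k : ℤ) * h) / s)).submatrix e e := by
  have hsk : (s : ℤ) ∣ k * h := dvd_mul_of_dvd_left (by exact_mod_cast hs ▸ Nat.gcd_dvd_left k m) h
  have hm : m = t * s := by rw [ht, Nat.div_mul_cancel (hs ▸ Nat.gcd_dvd_right k m)]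
  subst hm
  refine ⟨finProdFinEquiv.symm, ?_⟩
  rw [Bmat_pow, ← Bmat_mul_mul_eq_submatrix_blockDiagonal, Int.mul_ediv_cancel' hsk]

end
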